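/- Let n ∈ ℝ, k_n = n − 1, and k₀, k₁, k₂ ∈ ℝ. Consider the Hamiltonian H_na' = T_n + k₀/r^{2k_n} + (1/r^{k_n})(k₁ cos(k_n φ) + k₂ sin(k_n φ)) on Ω = {r > 0}, and define the complex-valued function M_n = M_{n1} + i M_{n2} with M_{n1} = r^{2k_n}(r² p_r² − p_φ²) + 2k₀/r^{2k_n} + (2/r^{k_n})(k₁ cos(k_n φ) + k₂ sin(k_n φ)) and M_{n2} = 2 r^{2n−1} p_r p_φ + (2/r^{k_n})(k₁ sin(k_n φ) − k₂ cos(k_n φ)). Then {M_n, H_na'} = 2i λ_n M_n at every point of Ω, where λ_n = (n − 1) r^{2k_n} p_φ. -/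

import Mathlib

open Real

/-- Canonical Poisson bracket, extended to complex-valued functions on the phase
space Ω ⊆ ℝ⁴ with coordinates (r, φ, p_r, p_φ). -/
noncomputable def pbC (F G : ℝ → ℝ → ℝ → ℝ → ℂ) (r φ pr pφ : ℝ) : ℂ :=
  (deriv (fun x => F x φ pr pφ) r) * (deriv (fun x => G r φ x pφ) pr)
    - (deriv (fun x => F r φ x pφ) pr) * (deriv (fun x => G x φ pr pφ) r)
    + (deriv (fun x => F r x pr pφ) φ) * (deriv (fun x => G r φ pr x) pφ)
    - (deriv (fun x => F r φ pr x) pφ) * (deriv (fun x => G r x pr pφ) φ)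

/-- Kinetic Hamiltonian T_n = (1/2) r^(2n) (p_r² + p_φ²/r²) of the
position dependent mass m_n = 1/r^(2n). -/
noncomputable def Tkin (n : ℝ) (r φ pr pφ : ℝ) : ℝ :=
  (1/2) * r ^ (2*n) * (pr^2 + pφ^2 / r^2)

/-- The Hamiltonian H_na' = T_n + k₀/r^(2k_n) + (1/r^(k_n))(k₁ cos(k_n φ) + k₂ sin(k_n φ)),
regarded as a complex-valued function. -/
noncomputable def HnapC (n k0 k1 k2 : ℝ) (r φ pr pφ : ℝ) : ℂ :=
  ((Tkin n r φ pr pφ + k0 / r ^ (2*(n-1))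
    + (1 / r ^ (n-1)) * (k1 * cos ((n-1)*φ) + k2 * sin ((n-1)*φ)) : ℝ) : ℂ)

/-- The complex function M_n = M_{n1} + i M_{n2}. -/
noncomputable def Mn (n k0 k1 k2 : ℝ) (r φ pr pφ : ℝ) : ℂ :=
  ((r ^ (2*(n-1)) * (r^2 * pr^2 - pφ^2) + 2*k0 / r ^ (2*(n-1))
      + (2 / r ^ (n-1)) * (k1 * cos ((n-1)*φ) + k2 * sin ((n-1)*φ)) : ℝ) : ℂ)
    + Complex.I *
    ((2 * r ^ (2*n-1) * pr * pφ
      + (2 / r ^ (n-1)) * (k1 * sin ((n-1)*φ) - k2 * cos ((n-1)*φ)) : ℝ) : ℂ)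

/-- The complex function N_φ = cos(2k_n φ) + i sin(2k_n φ). -/
noncomputable def Nphi2 (n : ℝ) (r φ pr pφ : ℝ) : ℂ :=
  ((cos (2*(n-1)*φ) : ℝ) : ℂ) + Complex.I * ((sin (2*(n-1)*φ) : ℝ) : ℂ)

/-!
Write `u = r^(n-1)`; on `r > 0` every power of `r` in `M_n` and `H_na'` is a monomial in `u` and
`r` (`r^(2k_n) = u²`, `r^(2n) = u² r²`, `r^(2n-1) = u² r`), and so are all eight first partial
derivatives. Since `H_na'` is real, `{M_n, H_na'} = {M_{n1}, H_na'} + i {M_{n2}, H_na'}`, and the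
potential parts of `M_n` and `H_na'` depend on `(r, φ)` only, so they bracket to zero. What is left
is a rational identity in `u, r, p_r, p_φ, cos (k_n φ), sin (k_n φ)`, with no need for
`cos² + sin² = 1`.
-/

structure HasPartialDerivsAt {E : Type*} [NormedAddCommGroup E] [NormedSpace ℝ E]
    (F : ℝ → ℝ → ℝ → ℝ → E) (r φ pr pφ : ℝ) (Fr Fφ Fpr Fpφ : E) : Prop where
  dr : HasDerivAt (fun x => F x φ pr pφ) Fr r
  dφ : HasDerivAt (fun x => F r x pr pφ) Fφ φ
  dpr : HasDerivAt (fun x => F r φ x pφ) Fpr pr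
  dpφ : HasDerivAt (fun x => F r φ pr x) Fpφ pφ

namespace HasPartialDerivsAt

variable {F G : ℝ → ℝ → ℝ → ℝ → ℝ} {r φ pr pφ : ℝ}

theorem ofReal {Fr Fφ Fpr Fpφ : ℝ} (h : HasPartialDerivsAt F r φ pr pφ Fr Fφ Fpr Fpφ) :
    HasPartialDerivsAt (fun r φ pr pφ => (F r φ pr pφ : ℂ)) r φ pr pφ Fr Fφ Fpr Fpφ :=
  ⟨h.dr.ofReal_comp, h.dφ.ofReal_comp, h.dpr.ofReal_comp, h.dpφ.ofReal_comp⟩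

theorem ofReal_add_I_mul {Fr Fφ Fpr Fpφ Gr Gφ Gpr Gpφ : ℝ}
    (hF : HasPartialDerivsAt F r φ pr pφ Fr Fφ Fpr Fpφ)
    (hG : HasPartialDerivsAt G r φ pr pφ Gr Gφ Gpr Gpφ) :
    HasPartialDerivsAt (fun r φ pr pφ => (F r φ pr pφ : ℂ) + Complex.I * G r φ pr pφ)
      r φ pr pφ (Fr + Complex.I * Gr) (Fφ + Complex.I * Gφ) (Fpr + Complex.I * Gpr)
      (Fpφ + Complex.I * Gpφ) :=
  ⟨hF.dr.ofReal_comp.add (hG.dr.ofReal_comp.const_mul _),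
    hF.dφ.ofReal_comp.add (hG.dφ.ofReal_comp.const_mul _),
    hF.dpr.ofReal_comp.add (hG.dpr.ofReal_comp.const_mul _),
    hF.dpφ.ofReal_comp.add (hG.dpφ.ofReal_comp.const_mul _)⟩

end HasPartialDerivsAt

theorem pbC_eq_of_hasPartialDerivsAt {F G : ℝ → ℝ → ℝ → ℝ → ℂ} {r φ pr pφ : ℝ}
    {Fr Fφ Fpr Fpφ Gr Gφ Gpr Gpφ : ℂ}
    (hF : HasPartialDerivsAt F r φ pr pφ Fr Fφ Fpr Fpφ)
    (hG : HasPartialDerivsAt G r φ pr pφ Gr Gφ Gpr Gpφ) :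
    pbC F G r φ pr pφ = Fr * Gpr - Fpr * Gr + Fφ * Gpφ - Fpφ * Gφ := by
  rw [pbC, hF.dr.deriv, hF.dφ.deriv, hF.dpr.deriv, hF.dpφ.deriv, hG.dr.deriv, hG.dφ.deriv,
    hG.dpr.deriv, hG.dpφ.deriv]

section Rpow

variable {r : ℝ}

theorem rpow_two_mul_eq_sq (hr : 0 ≤ r) (k : ℝ) : r ^ (2 * k) = (r ^ k) ^ 2 := by
  rw [mul_comm, Real.rpow_mul hr, Real.rpow_two]

theorem rpow_two_mul_eq_sq_mul_sq (hr : 0 < r) (n : ℝ) :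
    r ^ (2 * n) = (r ^ (n - 1)) ^ 2 * r ^ 2 := by
  rw [show 2 * n = 2 * (n - 1) + 2 by ring, Real.rpow_add hr, rpow_two_mul_eq_sq hr.le,
    Real.rpow_two]

theorem rpow_two_mul_sub_one_eq_sq_mul (hr : 0 < r) (n : ℝ) :
    r ^ (2 * n - 1) = (r ^ (n - 1)) ^ 2 * r := by
  rw [Real.rpow_sub_one hr.ne', rpow_two_mul_eq_sq_mul_sq hr]
  field_simp

end Rpow

theorem hasDerivAt_rpow_const_of_pos {r : ℝ} (hr : 0 < r) (e : ℝ) :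
    HasDerivAt (fun x => x ^ e) (e * r ^ e / r) r := by
  simpa only [Real.rpow_sub_one hr.ne', mul_div_assoc] using
    Real.hasDerivAt_rpow_const (p := e) (Or.inl hr.ne')

theorem hasDerivAt_cos_const_mul (k φ : ℝ) :
    HasDerivAt (fun x => cos (k * x)) (-(k * sin (k * φ))) φ := by
  simpa [mul_comm] using ((hasDerivAt_id φ).const_mul k).cos

theorem hasDerivAt_sin_const_mul (k φ : ℝ) :
    HasDerivAt (fun x => sin (k * x)) (k * cos (k * φ)) φ := by
  simpa [mul_comm] using ((hasDerivAt_id φ).const_mul k).sin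

noncomputable def Mn1 (n k0 k1 k2 r φ pr pφ : ℝ) : ℝ :=
  r ^ (2*(n-1)) * (r^2 * pr^2 - pφ^2) + 2*k0 / r ^ (2*(n-1))
    + (2 / r ^ (n-1)) * (k1 * cos ((n-1)*φ) + k2 * sin ((n-1)*φ))

noncomputable def Mn2 (n k1 k2 r φ pr pφ : ℝ) : ℝ :=
  2 * r ^ (2*n-1) * pr * pφ + (2 / r ^ (n-1)) * (k1 * sin ((n-1)*φ) - k2 * cos ((n-1)*φ))

noncomputable def Hnap (n k0 k1 k2 r φ pr pφ : ℝ) : ℝ :=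
  Tkin n r φ pr pφ + k0 / r ^ (2*(n-1))
    + (1 / r ^ (n-1)) * (k1 * cos ((n-1)*φ) + k2 * sin ((n-1)*φ))

section PartialDerivatives

variable (n k0 k1 k2 : ℝ) {r : ℝ} (φ pr pφ : ℝ) (hr : 0 < r)
include hr

theorem hasPartialDerivsAt_Hnap :
    HasPartialDerivsAt (Hnap n k0 k1 k2) r φ pr pφ
      (n * (r ^ (n-1)) ^ 2 * r * pr ^ 2 + (n-1) * (r ^ (n-1)) ^ 2 * pφ ^ 2 / r
        - 2 * (n-1) * k0 / ((r ^ (n-1)) ^ 2 * r)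
        - (n-1) * (k1 * cos ((n-1)*φ) + k2 * sin ((n-1)*φ)) / (r ^ (n-1) * r))
      ((n-1) * (k2 * cos ((n-1)*φ) - k1 * sin ((n-1)*φ)) / r ^ (n-1))
      ((r ^ (n-1)) ^ 2 * r ^ 2 * pr)
      ((r ^ (n-1)) ^ 2 * pφ) := by
  have hu : r ^ (n-1) ≠ 0 := (Real.rpow_pos_of_pos hr _).ne'
  have hu2 : r ^ (2*(n-1)) ≠ 0 := (Real.rpow_pos_of_pos hr _).ne'
  constructor
  · refine ((((hasDerivAt_rpow_const_of_pos hr (2*n)).const_mul (1/2)).mul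
      (((hasDerivAt_const r (pφ^2)).div (hasDerivAt_pow 2 r) (pow_ne_zero 2 hr.ne')).const_add
        (pr^2))).add
      ((hasDerivAt_const r k0).div (hasDerivAt_rpow_const_of_pos hr (2*(n-1))) hu2)).add
      (((hasDerivAt_const r 1).div (hasDerivAt_rpow_const_of_pos hr (n-1)) hu).mul_const
        (k1 * cos ((n-1)*φ) + k2 * sin ((n-1)*φ))) |>.congr_deriv ?_
    simp only [Pi.div_apply]
    rw [rpow_two_mul_eq_sq_mul_sq hr, rpow_two_mul_eq_sq hr.le]
    field_simp
    ring
  · refine ((((hasDerivAt_cos_const_mul (n-1) φ).const_mul k1).add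
      ((hasDerivAt_sin_const_mul (n-1) φ).const_mul k2)).const_mul (1 / r ^ (n-1))).const_add
      (Tkin n r φ pr pφ + k0 / r ^ (2*(n-1))) |>.congr_deriv ?_
    field_simp
    ring
  · refine ((((hasDerivAt_pow 2 pr).add_const (pφ^2 / r^2)).const_mul (1/2 * r ^ (2*n))).add_const
      (k0 / r ^ (2*(n-1)))).add_const
      ((1 / r ^ (n-1)) * (k1 * cos ((n-1)*φ) + k2 * sin ((n-1)*φ))) |>.congr_deriv ?_
    rw [rpow_two_mul_eq_sq_mul_sq hr]
    ring
  · refine (((((hasDerivAt_pow 2 pφ).div_const (r^2)).const_add (pr^2)).const_mul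
      (1/2 * r ^ (2*n))).add_const (k0 / r ^ (2*(n-1)))).add_const
      ((1 / r ^ (n-1)) * (k1 * cos ((n-1)*φ) + k2 * sin ((n-1)*φ))) |>.congr_deriv ?_
    rw [rpow_two_mul_eq_sq_mul_sq hr]
    field_simp
    ring

theorem hasPartialDerivsAt_Mn1 :
    HasPartialDerivsAt (Mn1 n k0 k1 k2) r φ pr pφ
      (2 * n * (r ^ (n-1)) ^ 2 * r * pr ^ 2 - 2 * (n-1) * (r ^ (n-1)) ^ 2 * pφ ^ 2 / r
        - 4 * (n-1) * k0 / ((r ^ (n-1)) ^ 2 * r)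
        - 2 * (n-1) * (k1 * cos ((n-1)*φ) + k2 * sin ((n-1)*φ)) / (r ^ (n-1) * r))
      (2 * (n-1) * (k2 * cos ((n-1)*φ) - k1 * sin ((n-1)*φ)) / r ^ (n-1))
      (2 * (r ^ (n-1)) ^ 2 * r ^ 2 * pr)
      (-(2 * (r ^ (n-1)) ^ 2 * pφ)) := by
  have hu : r ^ (n-1) ≠ 0 := (Real.rpow_pos_of_pos hr _).ne'
  have hu2 : r ^ (2*(n-1)) ≠ 0 := (Real.rpow_pos_of_pos hr _).ne'
  constructor
  · refine (((hasDerivAt_rpow_const_of_pos hr (2*(n-1))).mul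
      (((hasDerivAt_pow 2 r).mul_const (pr^2)).sub_const (pφ^2))).add
      ((hasDerivAt_const r (2*k0)).div (hasDerivAt_rpow_const_of_pos hr (2*(n-1))) hu2)).add
      (((hasDerivAt_const r 2).div (hasDerivAt_rpow_const_of_pos hr (n-1)) hu).mul_const
        (k1 * cos ((n-1)*φ) + k2 * sin ((n-1)*φ))) |>.congr_deriv ?_
    rw [rpow_two_mul_eq_sq hr.le]
    field_simp
    ring
  · refine ((((hasDerivAt_cos_const_mul (n-1) φ).const_mul k1).add
      ((hasDerivAt_sin_const_mul (n-1) φ).const_mul k2)).const_mul (2 / r ^ (n-1))).const_add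
      (r ^ (2*(n-1)) * (r^2 * pr^2 - pφ^2) + 2*k0 / r ^ (2*(n-1))) |>.congr_deriv ?_
    field_simp
    ring
  · refine (((((hasDerivAt_pow 2 pr).const_mul (r^2)).sub_const (pφ^2)).const_mul
      (r ^ (2*(n-1)))).add_const (2*k0 / r ^ (2*(n-1)))).add_const
      ((2 / r ^ (n-1)) * (k1 * cos ((n-1)*φ) + k2 * sin ((n-1)*φ))) |>.congr_deriv ?_
    rw [rpow_two_mul_eq_sq hr.le]
    ring
  · refine ((((hasDerivAt_pow 2 pφ).const_sub (r^2 * pr^2)).const_mul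
      (r ^ (2*(n-1)))).add_const (2*k0 / r ^ (2*(n-1)))).add_const
      ((2 / r ^ (n-1)) * (k1 * cos ((n-1)*φ) + k2 * sin ((n-1)*φ))) |>.congr_deriv ?_
    rw [rpow_two_mul_eq_sq hr.le]
    ring

theorem hasPartialDerivsAt_Mn2 :
    HasPartialDerivsAt (Mn2 n k1 k2) r φ pr pφ
      (2 * (2*n-1) * (r ^ (n-1)) ^ 2 * pr * pφ
        - 2 * (n-1) * (k1 * sin ((n-1)*φ) - k2 * cos ((n-1)*φ)) / (r ^ (n-1) * r))
      (2 * (n-1) * (k1 * cos ((n-1)*φ) + k2 * sin ((n-1)*φ)) / r ^ (n-1))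
      (2 * (r ^ (n-1)) ^ 2 * r * pφ)
      (2 * (r ^ (n-1)) ^ 2 * r * pr) := by
  have hu : r ^ (n-1) ≠ 0 := (Real.rpow_pos_of_pos hr _).ne'
  constructor
  · refine ((((hasDerivAt_rpow_const_of_pos hr (2*n-1)).const_mul 2).mul_const pr).mul_const
      pφ).add (((hasDerivAt_const r 2).div (hasDerivAt_rpow_const_of_pos hr (n-1)) hu).mul_const
        (k1 * sin ((n-1)*φ) - k2 * cos ((n-1)*φ))) |>.congr_deriv ?_
    rw [rpow_two_mul_sub_one_eq_sq_mul hr]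
    field_simp
    ring
  · refine ((((hasDerivAt_sin_const_mul (n-1) φ).const_mul k1).sub
      ((hasDerivAt_cos_const_mul (n-1) φ).const_mul k2)).const_mul (2 / r ^ (n-1))).const_add
      (2 * r ^ (2*n-1) * pr * pφ) |>.congr_deriv ?_
    field_simp
    ring
  · refine (((hasDerivAt_id pr).const_mul (2 * r ^ (2*n-1))).mul_const pφ).add_const
      ((2 / r ^ (n-1)) * (k1 * sin ((n-1)*φ) - k2 * cos ((n-1)*φ))) |>.congr_deriv ?_
    rw [rpow_two_mul_sub_one_eq_sq_mul hr]
    ring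
  · refine ((hasDerivAt_id pφ).const_mul (2 * r ^ (2*n-1) * pr)).add_const
      ((2 / r ^ (n-1)) * (k1 * sin ((n-1)*φ) - k2 * cos ((n-1)*φ))) |>.congr_deriv ?_
    rw [rpow_two_mul_sub_one_eq_sq_mul hr]
    ring

end PartialDerivatives

/-- {M_n, H_na'} = 2i λ_n M_n with λ_n = (n−1) r^(2k_n) p_φ, on Ω = {r > 0}. -/
theorem Mn_bracket_Hnap (n k0 k1 k2 : ℝ) :
    ∀ r φ pr pφ : ℝ, 0 < r →
      pbC (Mn n k0 k1 k2) (HnapC n k0 k1 k2) r φ pr pφ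
        = 2 * Complex.I * (((n-1) * r ^ (2*(n-1)) * pφ : ℝ) : ℂ)
            * Mn n k0 k1 k2 r φ pr pφ := by
  intro r φ pr pφ hr
  -- `Mn` and `HnapC` unfold to `↑Mn1 + I * ↑Mn2` and `↑Hnap`.
  have hM : HasPartialDerivsAt (Mn n k0 k1 k2) r φ pr pφ _ _ _ _ :=
    (hasPartialDerivsAt_Mn1 n k0 k1 k2 φ pr pφ hr).ofReal_add_I_mul
      (hasPartialDerivsAt_Mn2 n k1 k2 φ pr pφ hr)
  have hH : HasPartialDerivsAt (HnapC n k0 k1 k2) r φ pr pφ _ _ _ _ :=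
    (hasPartialDerivsAt_Hnap n k0 k1 k2 φ pr pφ hr).ofReal
  have hu : r ^ (n-1) ≠ 0 := (Real.rpow_pos_of_pos hr _).ne'
  rw [pbC_eq_of_hasPartialDerivsAt hM hH, Mn, rpow_two_mul_eq_sq hr.le,
    rpow_two_mul_sub_one_eq_sq_mul hr]
  apply Complex.ext <;>
    simp only [Complex.add_re, Complex.add_im, Complex.sub_re, Complex.sub_im,
      Complex.mul_re, Complex.mul_im, Complex.ofReal_re, Complex.ofReal_im,
      Complex.I_re, Complex.I_im, Complex.re_ofNat, Complex.im_ofNat] <;>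
    field_simp <;>
    ring
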